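/- Let h be an element of the Radford algebra H such that Δ(h) = h ⊗ g + 1 ⊗ h. Then there exist λ₁, λ₂, λ₃ ∈ ℂ such that h = λ₁x + λ₂y + λ₃(1 - g). -/

import Mathlib

/-!
Expand `h = ∑ c(r,s,l) • y^r x^s g^l` in the PBW basis. Since `g y = ω y g` and `g x = ω⁻¹ x g`,
the `q`-binomial theorem gives
`Δ(y^r x^s g^l) = ∑ [r,k]_ω [s,j]_{ω⁻¹} ω^{-(r-k)j} y^(r-k) x^(s-j) g^l ⊗ y^k x^j g^(r-k+s-j+l)`,
so every coefficient of `Δh` in the tensor basis is one `c(r,s,l)` times a product of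
`q`-binomials. Comparing with `h ⊗ g + 1 ⊗ h`: the coefficient at `y^(r-1) x^s g^l ⊗ y g^(…)` is
`[r]_ω c(r,s,l)`, which must vanish unless `(r,s,l) = (1,0,0)`, and `[r]_ω ≠ 0` for `0 < r < n`
because `ω` is a primitive `n`-th root of unity; symmetrically for `x`. On the group-like part,
the coefficients at `g^l ⊗ g^l` and `1 ⊗ g` give `c(0,0,l) = 0` for `l ∉ {0, 1}` and
`c(0,0,0) + c(0,0,1) = 0`.
-/

open TensorProduct

noncomputable section

/-- The Gaussian (`q`-)binomial coefficient `C(m, k)_q`, defined by the `q`-Pascal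
recurrence `C(m+1, k+1)_q = C(m, k)_q + q^(k+1) * C(m, k+1)_q`. -/
def qBinom (q : ℂ) : ℕ → ℕ → ℂ
  | _, 0 => 1
  | 0, _ + 1 => 0
  | m + 1, k + 1 => qBinom q m k + q ^ (k + 1) * qBinom q m (k + 1)

/-- The Radford algebra: a Hopf algebra `H` over `ℂ` generated by elements
`g, x, y` subject to the relations `g^n = 1`, `x^n = y^n = 0`, `xg = ω g x`,
`g y = ω y g`, `x y = ω y x`, where `ω` is a root of unity of order `n > 1`,
with the comultiplication, counit and antipode determined by
`Δ(g) = g ⊗ g`, `ε(g) = 1`, `S(g) = g^(n-1)`,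
`Δ(x) = x ⊗ g + 1 ⊗ x`, `ε(x) = 0`, `S(x) = -x g^(n-1)`,
`Δ(y) = y ⊗ g + 1 ⊗ y`, `ε(y) = 0`, `S(y) = -y g^(n-1)`,
and with canonical `ℂ`-basis `{y^r x^s g^l | 0 ≤ r, s, l < n}`. -/
structure RadfordAlgebra (n : ℕ) (ω : ℂ) (H : Type*) [Ring H] [HopfAlgebra ℂ H] where
  g : H
  x : H
  y : H
  hn : 1 < n
  hω : IsPrimitiveRoot ω n
  g_pow : g ^ n = 1
  x_pow : x ^ n = 0
  y_pow : y ^ n = 0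
  rel_xg : x * g = ω • (g * x)
  rel_gy : g * y = ω • (y * g)
  rel_xy : x * y = ω • (y * x)
  comul_g : Coalgebra.comul (R := ℂ) g = g ⊗ₜ[ℂ] g
  counit_g : Coalgebra.counit (R := ℂ) g = 1
  antipode_g : HopfAlgebra.antipode (R := ℂ) g = g ^ (n - 1)
  comul_x : Coalgebra.comul (R := ℂ) x = x ⊗ₜ[ℂ] g + 1 ⊗ₜ[ℂ] x
  counit_x : Coalgebra.counit (R := ℂ) x = 0
  antipode_x : HopfAlgebra.antipode (R := ℂ) x = -(x * g ^ (n - 1))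
  comul_y : Coalgebra.comul (R := ℂ) y = y ⊗ₜ[ℂ] g + 1 ⊗ₜ[ℂ] y
  counit_y : Coalgebra.counit (R := ℂ) y = 0
  antipode_y : HopfAlgebra.antipode (R := ℂ) y = -(y * g ^ (n - 1))
  gen : Algebra.adjoin ℂ ({g, x, y} : Set H) = ⊤
  basis : Module.Basis (Fin n × Fin n × Fin n) ℂ H
  basis_eq : ∀ r s l : Fin n, basis (r, s, l) = y ^ (r : ℕ) * x ^ (s : ℕ) * g ^ (l : ℕ)

/-- A `*`-structure on a Hopf algebra `H` over `ℂ`: a conjugate-linear map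
`* : H → H` such that `(h*)* = h`, `(hl)* = l* h*`,
`Δ(h*) = Σ (h₁)* ⊗ (h₂)*` and `S(S(h*)*) = h` for all `h, l ∈ H`.
(The condition on `Δ` is expressed via the auxiliary additive map `starTensor`
on `H ⊗[ℂ] H` sending `a ⊗ b` to `a* ⊗ b*`, which is uniquely determined by
its two defining properties.) -/
structure HopfStarStructure (H : Type*) [Ring H] [HopfAlgebra ℂ H] where
  star : H → H
  star_add : ∀ a b : H, star (a + b) = star a + star b
  star_smul : ∀ (c : ℂ) (a : H), star (c • a) = (starRingEnd ℂ c) • star a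
  star_star : ∀ a : H, star (star a) = a
  star_mul : ∀ a b : H, star (a * b) = star b * star a
  starTensor : H ⊗[ℂ] H → H ⊗[ℂ] H
  starTensor_add : ∀ u v : H ⊗[ℂ] H, starTensor (u + v) = starTensor u + starTensor v
  starTensor_tmul : ∀ a b : H, starTensor (a ⊗ₜ[ℂ] b) = star a ⊗ₜ[ℂ] star b
  comul_star : ∀ a : H,
    Coalgebra.comul (R := ℂ) (star a) = starTensor (Coalgebra.comul (R := ℂ) a)
  antipode_star : ∀ a : H,
    HopfAlgebra.antipode (R := ℂ) (star (HopfAlgebra.antipode (R := ℂ) (star a))) = a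

/-- Two `*`-structures `*'` and `*''` on a Hopf algebra `H` over `ℂ` are
equivalent if there is a Hopf algebra automorphism `ψ` of `H` such that
`ψ(h^{*'}) = ψ(h)^{*''}` for all `h ∈ H`. -/
def HopfStarStructure.Equivalent {H : Type*} [Ring H] [HopfAlgebra ℂ H]
    (s₁ s₂ : HopfStarStructure H) : Prop :=
  ∃ ψ : H ≃ₐc[ℂ] H, ∀ h : H, ψ (s₁.star h) = s₂.star (ψ h)

section QBinomial

theorem qBinom_zero_right (q : ℂ) (m : ℕ) : qBinom q m 0 = 1 := by
  cases m <;> rfl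

theorem qBinom_succ_succ (q : ℂ) (m k : ℕ) :
    qBinom q (m + 1) (k + 1) = qBinom q m k + q ^ (k + 1) * qBinom q m (k + 1) := rfl

theorem qBinom_eq_zero_of_lt (q : ℂ) {m k : ℕ} (h : m < k) : qBinom q m k = 0 := by
  induction m generalizing k with
  | zero => obtain ⟨k, rfl⟩ := Nat.exists_eq_add_of_lt h; rfl
  | succ m ih =>
    obtain ⟨k, rfl⟩ := Nat.exists_eq_add_of_lt (Nat.zero_lt_of_lt h)
    rw [zero_add, qBinom_succ_succ, ih (by omega), ih (by omega), mul_zero, add_zero]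

theorem qBinom_one_right (q : ℂ) (m : ℕ) : qBinom q m 1 = ∑ i ∈ Finset.range m, q ^ i := by
  induction m with
  | zero => rfl
  | succ m ih =>
    rw [qBinom_succ_succ, qBinom_zero_right, ih, Finset.sum_range_succ', Finset.mul_sum]
    simp only [pow_one, ← pow_succ', zero_add, pow_zero, add_comm]

theorem IsPrimitiveRoot.qBinom_one_right_ne_zero {q : ℂ} {n m : ℕ} (hq : IsPrimitiveRoot q n)
    (hm : 0 < m) (hmn : m < n) : qBinom q m 1 ≠ 0 := by
  have hq1 : q ≠ 1 := hq.ne_one (by omega)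
  rw [qBinom_one_right, geom_sum_eq hq1, div_ne_zero_iff, sub_ne_zero, sub_ne_zero]
  exact ⟨hq.pow_ne_one_of_pos_of_lt hm.ne' hmn, hq1⟩

theorem mul_pow_eq_smul_of_mul_eq_smul {R A : Type*} [CommSemiring R] [Semiring A]
    [Algebra R A] {a b : A} {q : R} (h : a * b = q • (b * a)) (k : ℕ) :
    a * b ^ k = q ^ k • (b ^ k * a) := by
  induction k with
  | zero => simp
  | succ k ih =>
    rw [pow_succ, ← mul_assoc, ih, smul_mul_assoc, mul_assoc, h, mul_smul_comm, smul_smul,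
      ← mul_assoc, ← pow_succ, ← pow_succ]

theorem pow_mul_pow_eq_smul_of_mul_eq_smul {R A : Type*} [CommSemiring R] [Semiring A]
    [Algebra R A] {a b : A} {q : R} (h : a * b = q • (b * a)) (p k : ℕ) :
    a ^ p * b ^ k = q ^ (p * k) • (b ^ k * a ^ p) := by
  induction p with
  | zero => simp
  | succ p ih =>
    rw [pow_succ, mul_assoc, mul_pow_eq_smul_of_mul_eq_smul h, mul_smul_comm, ← mul_assoc, ih,
      smul_mul_assoc, smul_smul, mul_assoc, ← pow_succ, ← pow_add, Nat.succ_mul, add_comm k]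

theorem add_pow_eq_sum_qBinom {A : Type*} [Semiring A] [Algebra ℂ A] {a b : A} {q : ℂ}
    (h : a * b = q • (b * a)) (m : ℕ) :
    (a + b) ^ m = ∑ k ∈ Finset.range (m + 1), qBinom q m k • (b ^ k * a ^ (m - k)) := by
  induction m with
  | zero => simp [qBinom_zero_right]
  | succ m ih =>
    have ha : ∀ k ∈ Finset.range (m + 1), a * (qBinom q m k • (b ^ k * a ^ (m - k))) =
        (q ^ k * qBinom q m k) • (b ^ k * a ^ (m + 1 - k)) := fun k hk => by
      rw [mul_smul_comm, ← mul_assoc, mul_pow_eq_smul_of_mul_eq_smul h, smul_mul_assoc, smul_smul,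
        mul_assoc, ← pow_succ', mul_comm (qBinom q m k),
        Nat.sub_add_comm (Nat.lt_succ_iff.mp (Finset.mem_range.mp hk))]
    have hb : ∀ k ∈ Finset.range (m + 1), b * (qBinom q m k • (b ^ k * a ^ (m - k))) =
        qBinom q m k • (b ^ (k + 1) * a ^ (m - k)) := fun k _ => by
      rw [mul_smul_comm, ← mul_assoc, ← pow_succ']
    rw [pow_succ', ih, add_mul, Finset.mul_sum, Finset.mul_sum, Finset.sum_congr rfl ha,
      Finset.sum_congr rfl hb, Finset.sum_range_succ' _ (m + 1), Finset.sum_range_succ' _ m,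
      Finset.sum_range_succ _ m, Finset.sum_range_succ _ m]
    simp only [qBinom_succ_succ, qBinom_zero_right, add_smul, Finset.sum_add_distrib,
      qBinom_eq_zero_of_lt q (Nat.lt_succ_self m), mul_zero, zero_smul, pow_zero, one_mul,
      Nat.add_sub_add_right, Nat.sub_zero]
    abel

end QBinomial

section Bialgebra

variable {H : Type*} [Semiring H] [Bialgebra ℂ H]

theorem comul_pow_of_comul_eq_tmul {c : H} (hc : Coalgebra.comul (R := ℂ) c = c ⊗ₜ[ℂ] c)
    (m : ℕ) : Coalgebra.comul (R := ℂ) (c ^ m) = (c ^ m) ⊗ₜ[ℂ] (c ^ m) := by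
  rw [← Bialgebra.comulAlgHom_apply ℂ H, map_pow, Bialgebra.comulAlgHom_apply, hc,
    Algebra.TensorProduct.tmul_pow]

theorem comul_pow_eq_sum_qBinom {a c : H} {q : ℂ}
    (ha : Coalgebra.comul (R := ℂ) a = a ⊗ₜ[ℂ] c + 1 ⊗ₜ[ℂ] a) (hca : c * a = q • (a * c))
    (m : ℕ) :
    Coalgebra.comul (R := ℂ) (a ^ m) =
      ∑ k ∈ Finset.range (m + 1), qBinom q m k • ((a ^ (m - k)) ⊗ₜ[ℂ] (a ^ k * c ^ (m - k))) := by
  have hq : (a ⊗ₜ[ℂ] c) * (1 ⊗ₜ[ℂ] a) = q • ((1 ⊗ₜ[ℂ] a) * (a ⊗ₜ[ℂ] c)) := by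
    simp only [Algebra.TensorProduct.tmul_mul_tmul, one_mul, mul_one, hca, tmul_smul]
  rw [← Bialgebra.comulAlgHom_apply ℂ H, map_pow, Bialgebra.comulAlgHom_apply, ha,
    add_pow_eq_sum_qBinom hq]
  simp only [Algebra.TensorProduct.tmul_pow, one_pow, Algebra.TensorProduct.tmul_mul_tmul,
    one_mul]

end Bialgebra

namespace RadfordAlgebra

variable {n : ℕ} {ω : ℂ} {H : Type*} [Ring H] [HopfAlgebra ℂ H] (R : RadfordAlgebra n ω H)

theorem n_pos (R : RadfordAlgebra n ω H) : 0 < n := Nat.zero_lt_of_lt R.hn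

theorem g_mul_x : R.g * R.x = ω⁻¹ • (R.x * R.g) := by
  rw [R.rel_xg, smul_smul, inv_mul_cancel₀ (R.hω.ne_zero R.n_pos.ne'), one_smul]

theorem comul_monomial (a b c : ℕ) :
    Coalgebra.comul (R := ℂ) (R.y ^ a * R.x ^ b * R.g ^ c) =
      ∑ k ∈ Finset.range (a + 1), ∑ j ∈ Finset.range (b + 1),
        (qBinom ω a k * qBinom ω⁻¹ b j * ω⁻¹ ^ ((a - k) * j)) •
          ((R.y ^ (a - k) * R.x ^ (b - j) * R.g ^ c) ⊗ₜ[ℂ]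
            (R.y ^ k * R.x ^ j * R.g ^ (a - k + (b - j) + c))) := by
  rw [← Bialgebra.comulAlgHom_apply ℂ H, map_mul, map_mul]
  simp only [Bialgebra.comulAlgHom_apply, comul_pow_eq_sum_qBinom R.comul_y R.rel_gy,
    comul_pow_eq_sum_qBinom R.comul_x R.g_mul_x, comul_pow_of_comul_eq_tmul R.comul_g]
  rw [Finset.sum_mul_sum]
  simp only [Finset.sum_mul]
  refine Finset.sum_congr rfl fun k _ => Finset.sum_congr rfl fun j _ => ?_
  have hgx : R.y ^ k * R.g ^ (a - k) * (R.x ^ j * R.g ^ (b - j)) * R.g ^ c =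
      ω⁻¹ ^ ((a - k) * j) • (R.y ^ k * R.x ^ j * R.g ^ (a - k + (b - j) + c)) := by
    rw [mul_assoc (R.y ^ k), ← mul_assoc (R.g ^ (a - k)),
      pow_mul_pow_eq_smul_of_mul_eq_smul R.g_mul_x, pow_add, pow_add]
    simp only [smul_mul_assoc, mul_smul_comm, mul_assoc]
  simp only [smul_mul_assoc, mul_smul_comm, Algebra.TensorProduct.tmul_mul_tmul, smul_smul]
  rw [hgx, tmul_smul, smul_smul]
  congr 1
  ring

theorem repr_monomial (r s l : ℕ) (i : Fin n × Fin n × Fin n) :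
    R.basis.repr (R.y ^ r * R.x ^ s * R.g ^ l) i =
      if (i.1 : ℕ) = r ∧ (i.2.1 : ℕ) = s ∧ (i.2.2 : ℕ) = l % n then 1 else 0 := by
  by_cases hrs : r < n ∧ s < n
  · obtain ⟨hr, hs⟩ := hrs
    rw [pow_eq_pow_mod l R.g_pow, ← R.basis_eq ⟨r, hr⟩ ⟨s, hs⟩ ⟨l % n, Nat.mod_lt l R.n_pos⟩,
      Module.Basis.repr_self, Finsupp.single_apply]
    simp only [Prod.ext_iff, Fin.ext_iff, eq_comm]
  · have hzero : R.y ^ r * R.x ^ s = 0 := by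
      rcases not_and_or.mp hrs with hr | hs
      · rw [← Nat.add_sub_of_le (not_lt.mp hr), pow_add, R.y_pow, zero_mul, zero_mul]
      · rw [← Nat.add_sub_of_le (not_lt.mp hs), pow_add, R.x_pow, zero_mul, mul_zero]
    rw [hzero, zero_mul, map_zero, Finsupp.zero_apply, if_neg]
    omega

theorem repr_comul_basis (i i₁ i₂ : Fin n × Fin n × Fin n) :
    (R.basis.tensorProduct R.basis).repr (Coalgebra.comul (R := ℂ) (R.basis i)) (i₁, i₂) =
      if (i.1 : ℕ) = i₁.1 + i₂.1 ∧ (i.2.1 : ℕ) = i₁.2.1 + i₂.2.1 ∧ i.2.2 = i₁.2.2 ∧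
          (i₂.2.2 : ℕ) = (i₁.1 + i₁.2.1 + i₁.2.2 : ℕ) % n then
        qBinom ω i.1 i₂.1 * qBinom ω⁻¹ i.2.1 i₂.2.1 * ω⁻¹ ^ ((i₁.1 : ℕ) * i₂.2.1)
      else 0 := by
  obtain ⟨⟨r, _⟩, ⟨s, _⟩, ⟨l, hl⟩⟩ := i
  obtain ⟨⟨r₁, _⟩, ⟨s₁, _⟩, ⟨l₁, _⟩⟩ := i₁
  obtain ⟨⟨r₂, _⟩, ⟨s₂, _⟩, ⟨l₂, _⟩⟩ := i₂
  simp only [R.basis_eq, R.comul_monomial, map_sum, Finsupp.finsetSum_apply, map_smul,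
    Finsupp.smul_apply, Module.Basis.tensorProduct_repr_tmul_apply, smul_eq_mul, R.repr_monomial,
    Fin.mk.injEq]
  by_cases hC : r = r₁ + r₂ ∧ s = s₁ + s₂ ∧ l = l₁ ∧ l₂ = (r₁ + s₁ + l₁) % n
  · obtain ⟨rfl, rfl, rfl, rfl⟩ := hC
    rw [if_pos ⟨rfl, rfl, rfl, rfl⟩, Finset.sum_eq_single r₂, Finset.sum_eq_single s₂]
    · simp [Nat.mod_eq_of_lt hl]
    · intro j _ hj
      simp [Ne.symm hj]
    · simp
    · intro k _ hk
      exact Finset.sum_eq_zero fun j _ => by simp [Ne.symm hk]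
    · simp
  · rw [if_neg hC]
    refine Finset.sum_eq_zero fun k hk => Finset.sum_eq_zero fun j hj => ?_
    rw [Finset.mem_range] at hk hj
    split_ifs with hA hB
    · obtain ⟨rfl, rfl, rfl⟩ := hA
      obtain ⟨rfl, rfl, rfl⟩ := hB
      refine absurd ⟨by omega, by omega, (Nat.mod_eq_of_lt hl).symm, ?_⟩ hC
      rw [Nat.mod_eq_of_lt hl]
    all_goals simp

theorem repr_comul_apply (h : H) {i i₁ i₂ : Fin n × Fin n × Fin n}
    (hr : (i.1 : ℕ) = i₁.1 + i₂.1) (hs : (i.2.1 : ℕ) = i₁.2.1 + i₂.2.1) (hl : i.2.2 = i₁.2.2) :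
    (R.basis.tensorProduct R.basis).repr (Coalgebra.comul (R := ℂ) h) (i₁, i₂) =
      if (i₂.2.2 : ℕ) = (i₁.1 + i₁.2.1 + i₁.2.2 : ℕ) % n then
        R.basis.repr h i *
          (qBinom ω i.1 i₂.1 * qBinom ω⁻¹ i.2.1 i₂.2.1 * ω⁻¹ ^ ((i₁.1 : ℕ) * i₂.2.1))
      else 0 := by
  conv_lhs => rw [← R.basis.sum_repr h]
  simp only [map_sum, map_smul, Finsupp.finsetSum_apply, Finsupp.smul_apply, smul_eq_mul,
    R.repr_comul_basis]
  rw [Finset.sum_eq_single i]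
  · simp only [hr, hs, hl, true_and]
    split_ifs <;> simp
  · intro j _ hj
    rw [if_neg, mul_zero]
    rintro ⟨hr', hs', hl', -⟩
    exact hj (Prod.ext (Fin.ext (hr'.trans hr.symm)) (Prod.ext (Fin.ext (hs'.trans hs.symm))
      (hl'.trans hl.symm)))
  · simp

theorem repr_one (i : Fin n × Fin n × Fin n) :
    R.basis.repr 1 i = if (i.1 : ℕ) = 0 ∧ (i.2.1 : ℕ) = 0 ∧ (i.2.2 : ℕ) = 0 then 1 else 0 := by
  rw [show (1 : H) = R.y ^ 0 * R.x ^ 0 * R.g ^ 0 by simp, R.repr_monomial, Nat.zero_mod]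

theorem repr_g (i : Fin n × Fin n × Fin n) :
    R.basis.repr R.g i = if (i.1 : ℕ) = 0 ∧ (i.2.1 : ℕ) = 0 ∧ (i.2.2 : ℕ) = 1 then 1 else 0 := by
  rw [show R.g = R.y ^ 0 * R.x ^ 0 * R.g ^ 1 by simp, R.repr_monomial, Nat.mod_eq_of_lt R.hn]

theorem repr_x (i : Fin n × Fin n × Fin n) :
    R.basis.repr R.x i = if (i.1 : ℕ) = 0 ∧ (i.2.1 : ℕ) = 1 ∧ (i.2.2 : ℕ) = 0 then 1 else 0 := by
  rw [show R.x = R.y ^ 0 * R.x ^ 1 * R.g ^ 0 by simp, R.repr_monomial, Nat.zero_mod]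

theorem repr_y (i : Fin n × Fin n × Fin n) :
    R.basis.repr R.y i = if (i.1 : ℕ) = 1 ∧ (i.2.1 : ℕ) = 0 ∧ (i.2.2 : ℕ) = 0 then 1 else 0 := by
  rw [show R.y = R.y ^ 1 * R.x ^ 0 * R.g ^ 0 by simp, R.repr_monomial, Nat.zero_mod]

section SkewPrimitive

variable {h : H}

theorem repr_identity_of_comul_eq (hh : Coalgebra.comul (R := ℂ) h = h ⊗ₜ[ℂ] R.g + 1 ⊗ₜ[ℂ] h)
    {i i₁ i₂ : Fin n × Fin n × Fin n} (hr : (i.1 : ℕ) = i₁.1 + i₂.1)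
    (hs : (i.2.1 : ℕ) = i₁.2.1 + i₂.2.1) (hl : i.2.2 = i₁.2.2) :
    (if (i₂.2.2 : ℕ) = (i₁.1 + i₁.2.1 + i₁.2.2 : ℕ) % n then
        R.basis.repr h i *
          (qBinom ω i.1 i₂.1 * qBinom ω⁻¹ i.2.1 i₂.2.1 * ω⁻¹ ^ ((i₁.1 : ℕ) * i₂.2.1))
      else 0) =
      (if (i₂.1 : ℕ) = 0 ∧ (i₂.2.1 : ℕ) = 0 ∧ (i₂.2.2 : ℕ) = 1 then R.basis.repr h i₁ else 0) +
      (if (i₁.1 : ℕ) = 0 ∧ (i₁.2.1 : ℕ) = 0 ∧ (i₁.2.2 : ℕ) = 0 then R.basis.repr h i₂ else 0) := by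
  rw [← R.repr_comul_apply h hr hs hl, hh, map_add, Finsupp.add_apply,
    Module.Basis.tensorProduct_repr_tmul_apply, Module.Basis.tensorProduct_repr_tmul_apply,
    R.repr_g, R.repr_one, smul_eq_mul, smul_eq_mul, ite_mul, one_mul, zero_mul, mul_ite,
    mul_one, mul_zero]

theorem repr_eq_zero_of_one_le_fst
    (hh : Coalgebra.comul (R := ℂ) h = h ⊗ₜ[ℂ] R.g + 1 ⊗ₜ[ℂ] h) (i : Fin n × Fin n × Fin n)
    (hi : 1 ≤ (i.1 : ℕ)) (hne : ¬((i.1 : ℕ) = 1 ∧ (i.2.1 : ℕ) = 0 ∧ (i.2.2 : ℕ) = 0)) :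
    R.basis.repr h i = 0 := by
  have key := R.repr_identity_of_comul_eq hh (i := i) (i₁ := (⟨i.1 - 1, by omega⟩, i.2.1, i.2.2))
    (i₂ := (⟨1, R.hn⟩, ⟨0, R.n_pos⟩, ⟨(i.1 - 1 + i.2.1 + i.2.2 : ℕ) % n, Nat.mod_lt _ R.n_pos⟩))
    (by simp; omega) (by simp) rfl
  simp only [if_true, qBinom_zero_right, mul_zero, pow_zero, mul_one, one_ne_zero, false_and,
    if_false, zero_add] at key
  rw [if_neg (by omega)] at key
  exact (mul_eq_zero.mp key).resolve_right (R.hω.qBinom_one_right_ne_zero hi i.1.isLt)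

theorem repr_eq_zero_of_one_le_snd
    (hh : Coalgebra.comul (R := ℂ) h = h ⊗ₜ[ℂ] R.g + 1 ⊗ₜ[ℂ] h) (i : Fin n × Fin n × Fin n)
    (hi : 1 ≤ (i.2.1 : ℕ)) (hne : ¬((i.1 : ℕ) = 0 ∧ (i.2.1 : ℕ) = 1 ∧ (i.2.2 : ℕ) = 0)) :
    R.basis.repr h i = 0 := by
  have key := R.repr_identity_of_comul_eq hh (i := i) (i₁ := (i.1, ⟨i.2.1 - 1, by omega⟩, i.2.2))
    (i₂ := (⟨0, R.n_pos⟩, ⟨1, R.hn⟩, ⟨(i.1 + (i.2.1 - 1) + i.2.2 : ℕ) % n, Nat.mod_lt _ R.n_pos⟩))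
    (by simp) (by simp; omega) rfl
  simp only [if_true, qBinom_zero_right, mul_one, one_mul, one_ne_zero, false_and, and_false,
    if_false, zero_add] at key
  rw [if_neg (by omega)] at key
  exact (mul_eq_zero.mp key).resolve_right (mul_ne_zero
    (R.hω.inv.qBinom_one_right_ne_zero hi i.2.1.isLt) (pow_ne_zero _ (inv_ne_zero
      (R.hω.ne_zero R.n_pos.ne'))))

theorem repr_eq_zero_of_g_pow
    (hh : Coalgebra.comul (R := ℂ) h = h ⊗ₜ[ℂ] R.g + 1 ⊗ₜ[ℂ] h) (i : Fin n × Fin n × Fin n)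
    (hr : (i.1 : ℕ) = 0) (hs : (i.2.1 : ℕ) = 0) (hl₀ : (i.2.2 : ℕ) ≠ 0) (hl₁ : (i.2.2 : ℕ) ≠ 1) :
    R.basis.repr h i = 0 := by
  have key := R.repr_identity_of_comul_eq hh (i := i) (i₁ := i) (i₂ := i) (by omega) (by omega) rfl
  simpa [hr, hs, hl₀, hl₁, Nat.mod_eq_of_lt i.2.2.isLt, qBinom_zero_right] using key

theorem repr_one_add_repr_g (hh : Coalgebra.comul (R := ℂ) h = h ⊗ₜ[ℂ] R.g + 1 ⊗ₜ[ℂ] h) :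
    R.basis.repr h (⟨0, R.n_pos⟩, ⟨0, R.n_pos⟩, ⟨0, R.n_pos⟩) +
      R.basis.repr h (⟨0, R.n_pos⟩, ⟨0, R.n_pos⟩, ⟨1, R.hn⟩) = 0 := by
  have key := R.repr_identity_of_comul_eq hh (i := (⟨0, R.n_pos⟩, ⟨0, R.n_pos⟩, ⟨0, R.n_pos⟩))
    (i₁ := (⟨0, R.n_pos⟩, ⟨0, R.n_pos⟩, ⟨0, R.n_pos⟩))
    (i₂ := (⟨0, R.n_pos⟩, ⟨0, R.n_pos⟩, ⟨1, R.hn⟩)) rfl rfl rfl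
  simpa using key.symm

theorem repr_eq_of_comul_eq (hh : Coalgebra.comul (R := ℂ) h = h ⊗ₜ[ℂ] R.g + 1 ⊗ₜ[ℂ] h)
    (i : Fin n × Fin n × Fin n) :
    R.basis.repr h i =
      R.basis.repr h (⟨0, R.n_pos⟩, ⟨1, R.hn⟩, ⟨0, R.n_pos⟩) *
          (if (i.1 : ℕ) = 0 ∧ (i.2.1 : ℕ) = 1 ∧ (i.2.2 : ℕ) = 0 then 1 else 0) +
        R.basis.repr h (⟨1, R.hn⟩, ⟨0, R.n_pos⟩, ⟨0, R.n_pos⟩) *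
          (if (i.1 : ℕ) = 1 ∧ (i.2.1 : ℕ) = 0 ∧ (i.2.2 : ℕ) = 0 then 1 else 0) +
        R.basis.repr h (⟨0, R.n_pos⟩, ⟨0, R.n_pos⟩, ⟨0, R.n_pos⟩) *
          ((if (i.1 : ℕ) = 0 ∧ (i.2.1 : ℕ) = 0 ∧ (i.2.2 : ℕ) = 0 then 1 else 0) -
            (if (i.1 : ℕ) = 0 ∧ (i.2.1 : ℕ) = 0 ∧ (i.2.2 : ℕ) = 1 then 1 else 0)) := by
  obtain ⟨⟨r, _⟩, ⟨s, _⟩, ⟨l, _⟩⟩ := i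
  dsimp only
  by_cases hx : r = 0 ∧ s = 1 ∧ l = 0
  · obtain ⟨rfl, rfl, rfl⟩ := hx
    simp
  by_cases hy : r = 1 ∧ s = 0 ∧ l = 0
  · obtain ⟨rfl, rfl, rfl⟩ := hy
    simp
  by_cases h₁ : r = 0 ∧ s = 0 ∧ l = 0
  · obtain ⟨rfl, rfl, rfl⟩ := h₁
    simp
  by_cases hg : r = 0 ∧ s = 0 ∧ l = 1
  · obtain ⟨rfl, rfl, rfl⟩ := hg
    simpa [eq_neg_iff_add_eq_zero, add_comm] using R.repr_one_add_repr_g hh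
  rw [if_neg hx, if_neg hy, if_neg h₁, if_neg hg, mul_zero, mul_zero, sub_self, mul_zero,
    add_zero, add_zero]
  rcases Nat.eq_zero_or_pos r with rfl | hr₁
  · rcases Nat.eq_zero_or_pos s with rfl | hs₁
    · exact R.repr_eq_zero_of_g_pow hh _ rfl rfl (fun h₀ => h₁ ⟨rfl, rfl, h₀⟩)
        (fun h₀ => hg ⟨rfl, rfl, h₀⟩)
    · exact R.repr_eq_zero_of_one_le_snd hh _ hs₁ hx
  · exact R.repr_eq_zero_of_one_le_fst hh _ hr₁ hy

end SkewPrimitive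

end RadfordAlgebra

/-- if `Δ(h) = h ⊗ g + 1 ⊗ h` then
`h = λ₁ x + λ₂ y + λ₃ (1 - g)` for some `λ₁, λ₂, λ₃ ∈ ℂ`. -/
theorem radford_g_primitive
    {n : ℕ} {ω : ℂ} {H : Type*} [Ring H] [HopfAlgebra ℂ H]
    (R : RadfordAlgebra n ω H) (h : H)
    (hh : Coalgebra.comul (R := ℂ) h = h ⊗ₜ[ℂ] R.g + 1 ⊗ₜ[ℂ] h) :
    ∃ l₁ l₂ l₃ : ℂ, h = l₁ • R.x + l₂ • R.y + l₃ • (1 - R.g) := by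
  refine ⟨R.basis.repr h (⟨0, R.n_pos⟩, ⟨1, R.hn⟩, ⟨0, R.n_pos⟩),
    R.basis.repr h (⟨1, R.hn⟩, ⟨0, R.n_pos⟩, ⟨0, R.n_pos⟩),
    R.basis.repr h (⟨0, R.n_pos⟩, ⟨0, R.n_pos⟩, ⟨0, R.n_pos⟩), R.basis.ext_elem fun i => ?_⟩
  simp only [map_add, map_sub, map_smul, Finsupp.add_apply, Finsupp.sub_apply, Finsupp.smul_apply,
    smul_eq_mul, R.repr_x, R.repr_y, R.repr_one, R.repr_g]
  exact R.repr_eq_of_comul_eq hh i
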